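/- arXiv:2303.13460 — 7 statements merged into one kernel-verified Lean document; each statement's English description precedes it below -/
import Mathlib

section
/- Let A, N_1, …, N_q ∈ ℝ^{n×n}, B ∈ ℝ^{n×m}, C ∈ ℝ^{p×n}, and let K = (k_{ij}) ∈ ℝ^{q×q} be symmetric positive semidefinite. Suppose Q ⪰ 0 is a symmetric positive semidefinite solution of the Riccati equation AᵀQ + QA + Σ_{i,j=1}^q N_iᵀ Q N_j k_{ij} + CᵀC − QBBᵀQ = 0. Then for every symmetric positive semidefinite V with QV = 0 one has: CV = 0, Q · (Σ_{i,j=1}^q N_i V N_jᵀ k_{ij}) = 0, and Q(AV + VAᵀ) = 0; in particular Q · (AV + VAᵀ + Σ_{i,j=1}^q N_i V N_jᵀ k_{ij}) = 0, so the subspace spanned by positive semidefinite matrices annihilated by Q is invariant under the map V ↦ AV + VAᵀ + Σ_{i,j=1}^q N_i V N_jᵀ k_{ij}. -/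
/-! Factor `K = Lᵀ * L`; with `G l = ∑ i, L l i • N i` both noise terms take the Kraus forms
`∑ l, (G l)ᵀ * X * G l` and `∑ l, G l * V * (G l)ᵀ`. Sandwiching the Riccati equation between
two copies of `V` kills every term containing `Q * V = 0` or `V * Q = 0` and leaves
`∑ l, (G l * V)ᵀ * Q * (G l * V) + (C * V)ᵀ * (C * V) = 0`, a sum of positive semidefinite
matrices. Hence `C * V = 0` and `Q * G l * V = 0`, and multiplying the Riccati equation by `V`
on the right then leaves `Q * A * V = 0`. -/

open Matrix
open scoped MatrixOrder ComplexOrder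

namespace Matrix

theorem sum_sum_transpose_mul_apply_smul {R ι κ a b c d : Type*} [CommSemiring R] [Fintype ι]
    [Fintype κ] [Fintype b] [Fintype c] (L : Matrix κ ι R) (E : ι → Matrix a b R)
    (P : Matrix b c R) (F : ι → Matrix c d R) :
    ∑ i, ∑ j, (Lᵀ * L) i j • (E i * P * F j)
      = ∑ l, (∑ i, L l i • E i) * P * (∑ j, L l j • F j) := by
  simp only [mul_apply, transpose_apply, Finset.sum_smul, Matrix.sum_mul, Matrix.mul_sum,
    Matrix.smul_mul, Matrix.mul_smul, Finset.smul_sum, smul_smul]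
  rw [Finset.sum_comm_cycle (β := Matrix a d R)]
  refine Finset.sum_congr rfl fun l _ => ?_
  rw [Finset.sum_comm (β := Matrix a d R)]
  simp only [mul_comm]

theorem PosSemidef.mul_eq_zero_of_conjTranspose_mul_mul_eq_zero {𝕜 n m : Type*} [RCLike 𝕜]
    [Fintype n] {Q : Matrix n n 𝕜} (hQ : Q.PosSemidef) {X : Matrix n m 𝕜}
    (h : Xᴴ * Q * X = 0) : Q * X = 0 := by
  classical
  obtain ⟨R, rfl⟩ := CStarAlgebra.nonneg_iff_eq_star_mul_self.mp hQ.nonneg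
  rw [star_eq_conjTranspose] at h ⊢
  have hRX : (R * X)ᴴ * (R * X) = 0 := by
    simpa only [conjTranspose_mul, Matrix.mul_assoc] using h
  rw [Matrix.mul_assoc, conjTranspose_mul_self_eq_zero.mp hRX, Matrix.mul_zero]

variable {n m p ι : Type*} [Fintype n] [Fintype ι]

theorem PosSemidef.exists_kraus_form {K : Matrix ι ι ℝ} (hK : K.PosSemidef)
    (N : ι → Matrix n n ℝ) :
    ∃ G : ι → Matrix n n ℝ, ∀ X : Matrix n n ℝ,
      ∑ i, ∑ j, K i j • ((N i)ᵀ * X * N j) = ∑ l, (G l)ᵀ * X * G l ∧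
      ∑ i, ∑ j, K i j • (N i * X * (N j)ᵀ) = ∑ l, G l * X * (G l)ᵀ := by
  classical
  obtain ⟨L, rfl⟩ := CStarAlgebra.nonneg_iff_eq_star_mul_self.mp hK.nonneg
  refine ⟨fun l => ∑ i, L l i • N i, fun X => ⟨?_, ?_⟩⟩ <;>
    simp only [star_eq_conjTranspose, conjTranspose_eq_transpose_of_trivial, transpose_sum,
      transpose_smul, sum_sum_transpose_mul_apply_smul]

variable [Fintype m] [Fintype p]

theorem mul_eq_zero_of_riccati {A Q V : Matrix n n ℝ} {B : Matrix n m ℝ} {C : Matrix p n ℝ}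
    {G : ι → Matrix n n ℝ} (hQ : Q.PosSemidef) (hV : V.IsSymm)
    (hric : Aᵀ * Q + Q * A + ∑ l, (G l)ᵀ * Q * G l + Cᵀ * C - Q * B * Bᵀ * Q = 0)
    (hQV : Q * V = 0) :
    C * V = 0 ∧ (∀ l, Q * (G l * V) = 0) ∧ Q * A * V = 0 := by
  have hVQ : V * Q = 0 := by
    simpa [transpose_mul, hV.eq, (isHermitian_iff_isSymm.mp hQ.isHermitian).eq]
      using congrArg transpose hQV
  have hdissip : ∑ l, (G l)ᵀ * Q * G l + Cᵀ * C = Q * (B * Bᵀ * Q - A) - Aᵀ * Q := by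
    rw [← sub_eq_zero, ← hric]
    simp only [Matrix.mul_sub, Matrix.mul_assoc]
    abel
  have hgram : ∑ l, (G l * V)ᴴ * Q * (G l * V) + (C * V)ᴴ * (C * V) = 0 := by
    have h : V * (∑ l, (G l)ᵀ * Q * G l + Cᵀ * C) * V = 0 := by
      rw [hdissip, Matrix.mul_sub, Matrix.sub_mul, ← Matrix.mul_assoc V Q, hVQ,
        Matrix.mul_assoc V, Matrix.mul_assoc Aᵀ, hQV]
      simp
    simpa only [conjTranspose_eq_transpose_of_trivial, transpose_mul, hV.eq, Matrix.mul_add,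
      Matrix.add_mul, Matrix.mul_sum, Matrix.sum_mul, Matrix.mul_assoc] using h
  have hterm (l : ι) : 0 ≤ (G l * V)ᴴ * Q * (G l * V) :=
    (hQ.conjTranspose_mul_mul_same _).nonneg
  rw [add_eq_zero_iff_of_nonneg (Finset.sum_nonneg fun l _ => hterm l)
    (posSemidef_conjTranspose_mul_self _).nonneg, conjTranspose_mul_self_eq_zero,
    Finset.sum_eq_zero_iff_of_nonneg fun l _ => hterm l] at hgram
  obtain ⟨hnoise, hCV⟩ := hgram
  have hQGV (l : ι) : Q * (G l * V) = 0 :=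
    hQ.mul_eq_zero_of_conjTranspose_mul_mul_eq_zero (hnoise l (Finset.mem_univ l))
  refine ⟨hCV, hQGV, ?_⟩
  have h := congrArg (· * V) hric
  simpa [Matrix.add_mul, Matrix.sub_mul, Matrix.sum_mul, Matrix.mul_assoc, hQV, hCV, hQGV] using h

end Matrix

/-- For a positive semidefinite solution `Q` of the observability Riccati equation,
the cone of positive semidefinite matrices annihilated by `Q` is invariant under
the adjoint generalized Lyapunov operator. -/
theorem stmt_2 {n m p q : ℕ}
    (A : Matrix (Fin n) (Fin n) ℝ) (N : Fin q → Matrix (Fin n) (Fin n) ℝ)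
    (B : Matrix (Fin n) (Fin m) ℝ) (C : Matrix (Fin p) (Fin n) ℝ)
    (K : Matrix (Fin q) (Fin q) ℝ) (hK : K.PosSemidef)
    (Q : Matrix (Fin n) (Fin n) ℝ) (hQ : Q.PosSemidef)
    (hric : Aᵀ * Q + Q * A + (∑ i : Fin q, ∑ j : Fin q, K i j • ((N i)ᵀ * Q * N j)) +
      Cᵀ * C - Q * B * Bᵀ * Q = 0) :
    ∀ V : Matrix (Fin n) (Fin n) ℝ, V.PosSemidef → Q * V = 0 →
      C * V = 0 ∧
      Q * (∑ i : Fin q, ∑ j : Fin q, K i j • (N i * V * (N j)ᵀ)) = 0 ∧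
      Q * (A * V + V * Aᵀ) = 0 ∧
      Q * (A * V + V * Aᵀ + ∑ i : Fin q, ∑ j : Fin q, K i j • (N i * V * (N j)ᵀ)) = 0 := by
  intro V hV hQV
  obtain ⟨G, hG⟩ := hK.exists_kraus_form N
  rw [(hG Q).1] at hric
  obtain ⟨hCV, hQGV, hQAV⟩ :=
    mul_eq_zero_of_riccati hQ (isHermitian_iff_isSymm.mp hV.isHermitian) hric hQV
  have hnoise : Q * ∑ i, ∑ j, K i j • (N i * V * (N j)ᵀ) = 0 := by
    rw [(hG V).2, Matrix.mul_sum]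
    exact Finset.sum_eq_zero fun l _ => by
      rw [← Matrix.mul_assoc, ← Matrix.mul_assoc, Matrix.mul_assoc Q, hQGV, Matrix.zero_mul]
  have hdrift : Q * (A * V + V * Aᵀ) = 0 := by
    rw [Matrix.mul_add, ← Matrix.mul_assoc, hQAV, ← Matrix.mul_assoc, hQV, Matrix.zero_mul,
      add_zero]
  exact ⟨hCV, hnoise, hdrift, by rw [Matrix.mul_add, hdrift, hnoise, add_zero]⟩
end

section
/- Let A, N_1, …, N_q ∈ ℝ^{n×n}, B ∈ ℝ^{n×m}, C ∈ ℝ^{p×n}, and let K = (k_{ij}) ∈ ℝ^{q×q} be symmetric positive semidefinite. The strict Riccati-type inequality AᵀP⁻¹ + P⁻¹A + Σ_{i,j=1}^q N_iᵀ P⁻¹ N_j k_{ij} − CᵀC + P⁻¹BBᵀP⁻¹ ≺ 0 possesses a symmetric positive definite solution P ≻ 0 if and only if there exists a symmetric positive definite X with AᵀX + XA + Σ_{i,j=1}^q N_iᵀ X N_j k_{ij} − CᵀC ≺ 0 (the latter condition being the algebraic characterization of stabilizability of the triple (Aᵀ, Cᵀ, N_iᵀ)). -/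
/-!
Write `X = P⁻¹`. The Riccati term `X B Bᵀ X` is positive semidefinite, so a solution of the strict
Riccati inequality solves the strict Lyapunov-type inequality. Conversely, replacing a Lyapunov
solution `X` by `c • X` scales the linear part by `c` but the Riccati term by `c²`; for small
`c ∈ (0, 1)` the strict Lyapunov inequality absorbs it, because positive definiteness is an open
condition, and the remaining `(1 - c) CᵀC` is positive semidefinite.
-/

open Matrix BigOperators Filter Topology Metric

namespace Matrix

variable {n : Type*} [Fintype n]

lemma posDef_of_forall_mem_sphere {M : Matrix n n ℝ} (hM : M.IsHermitian)
    (h : ∀ u ∈ sphere (0 : n → ℝ) 1, 0 < u ⬝ᵥ M *ᵥ u) : M.PosDef := by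
  refine PosDef.of_dotProduct_mulVec_pos hM fun x hx => ?_
  have hx' : 0 < ‖x‖ := norm_pos_iff.2 hx
  have hu : ‖x‖⁻¹ • x ∈ sphere (0 : n → ℝ) 1 := by
    simp [norm_smul, hx'.ne']
  have hscale : x ⬝ᵥ M *ᵥ x = ‖x‖ ^ 2 * ((‖x‖⁻¹ • x) ⬝ᵥ M *ᵥ (‖x‖⁻¹ • x)) := by
    simp only [mulVec_smul, dotProduct_smul, smul_dotProduct, smul_eq_mul]
    field_simp
  simpa [hscale] using mul_pos (pow_pos hx' 2) (h _ hu)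

lemma PosDef.eventually_sub_smul {D S : Matrix n n ℝ} (hD : D.PosDef) (hS : S.IsHermitian) :
    ∀ᶠ c in 𝓝 (0 : ℝ), (D - c • S).PosDef := by
  obtain ⟨ε, hε, hεu⟩ : ∃ ε > 0, ∀ u ∈ sphere (0 : n → ℝ) 1,
      ε * (|u ⬝ᵥ S *ᵥ u| + 1) ≤ u ⬝ᵥ D *ᵥ u := by
    rcases (sphere (0 : n → ℝ) 1).eq_empty_or_nonempty with hempty | hne
    · exact ⟨1, one_pos, by simp [hempty]⟩
    · have hcont : Continuous fun u : n → ℝ => u ⬝ᵥ D *ᵥ u / (|u ⬝ᵥ S *ᵥ u| + 1) := by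
        have hquad (M : Matrix n n ℝ) : Continuous fun u : n → ℝ => u ⬝ᵥ M *ᵥ u :=
          continuous_id.dotProduct (continuous_const.matrix_mulVec continuous_id)
        exact (hquad D).div ((hquad S).abs.add continuous_const) fun u => by positivity
      obtain ⟨u₀, hu₀, hmin⟩ := (isCompact_sphere 0 1).exists_isMinOn hne hcont.continuousOn
      have hu₀' : u₀ ≠ 0 := ne_zero_of_mem_sphere one_ne_zero ⟨u₀, hu₀⟩
      refine ⟨_, div_pos (hD.dotProduct_mulVec_pos hu₀') (by positivity : 0 < |u₀ ⬝ᵥ S *ᵥ u₀| + 1),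
        fun u hu => (le_div_iff₀ (by positivity)).1 (hmin hu)⟩
  filter_upwards [Metric.ball_mem_nhds 0 hε] with c hc
  refine posDef_of_forall_mem_sphere (hD.1.sub (hS.smul (IsSelfAdjoint.all c))) fun u hu => ?_
  rw [mem_ball, dist_zero_right, Real.norm_eq_abs] at hc
  have hsmall : c * (u ⬝ᵥ S *ᵥ u) ≤ ε * |u ⬝ᵥ S *ᵥ u| :=
    (le_abs_self _).trans (by rw [abs_mul]; gcongr)
  simp only [sub_mulVec, smul_mulVec, dotProduct_sub, dotProduct_smul, smul_eq_mul]
  linarith [hεu u hu]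

lemma IsHermitian.posSemidef_mul_mul_transpose_mul {m : Type*} [Fintype m] {X : Matrix n n ℝ}
    (hX : X.IsHermitian) (B : Matrix n m ℝ) : (X * B * Bᵀ * X).PosSemidef := by
  have h := posSemidef_conjTranspose_mul_self (Bᵀ * X)
  rwa [conjTranspose_mul, hX.eq, conjTranspose_eq_transpose_of_trivial, transpose_transpose,
    ← Matrix.mul_assoc] at h

end Matrix

section StochasticRiccati

variable {n ι m p : Type*} [Fintype n] [Fintype ι] [Fintype m] [Fintype p]
  (A : Matrix n n ℝ) (N : ι → Matrix n n ℝ) (K : Matrix ι ι ℝ)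
  (B : Matrix n m ℝ) (C : Matrix p n ℝ)

def stochasticLyapunov (X : Matrix n n ℝ) : Matrix n n ℝ :=
  Aᵀ * X + X * A + ∑ i, ∑ j, K i j • ((N i)ᵀ * X * N j)

lemma stochasticLyapunov_smul (c : ℝ) (X : Matrix n n ℝ) :
    stochasticLyapunov A N K (c • X) = c • stochasticLyapunov A N K X := by
  simp only [stochasticLyapunov, Matrix.mul_smul, Matrix.smul_mul, Finset.smul_sum, smul_add,
    smul_comm c]

variable {A N K}

lemma posDef_neg_stochasticLyapunov_of_riccati {X : Matrix n n ℝ} (hX : X.IsHermitian)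
    (h : (-(stochasticLyapunov A N K X - Cᵀ * C + X * B * Bᵀ * X)).PosDef) :
    (-(stochasticLyapunov A N K X - Cᵀ * C)).PosDef := by
  simpa using h.add_posSemidef (hX.posSemidef_mul_mul_transpose_mul B)

lemma exists_riccati_smul_of_stochasticLyapunov {X : Matrix n n ℝ} (hX : X.PosDef)
    (h : (-(stochasticLyapunov A N K X - Cᵀ * C)).PosDef) :
    ∃ c : ℝ, 0 < c ∧
      (-(stochasticLyapunov A N K (c • X) - Cᵀ * C + (c • X) * B * Bᵀ * (c • X))).PosDef := by
  have hS := hX.1.posSemidef_mul_mul_transpose_mul B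
  obtain ⟨c, hsub, hc0, hc1⟩ : ∃ c : ℝ, (-(stochasticLyapunov A N K X - Cᵀ * C) -
      c • (X * B * Bᵀ * X)).PosDef ∧ 0 < c ∧ c < 1 :=
    (((h.eventually_sub_smul hS.1).filter_mono nhdsWithin_le_nhds).and
      ((eventually_mem_nhdsWithin (s := Set.Ioi 0)).and
        (eventually_nhdsWithin_of_eventually_nhds (eventually_lt_nhds one_pos)))).exists
  refine ⟨c, hc0, ?_⟩
  have hCC : (Cᵀ * C).PosSemidef := by
    simpa using posSemidef_conjTranspose_mul_self C
  have hsplit : -(stochasticLyapunov A N K (c • X) - Cᵀ * C + (c • X) * B * Bᵀ * (c • X)) =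
      c • (-(stochasticLyapunov A N K X - Cᵀ * C) - c • (X * B * Bᵀ * X)) + (1 - c) • (Cᵀ * C) := by
    simp only [stochasticLyapunov_smul, Matrix.mul_smul, Matrix.smul_mul]
    module
  rw [hsplit]
  exact (hsub.smul hc0).add_posSemidef (hCC.smul (by linarith))

end StochasticRiccati

theorem stmt_3_general {n m p q : ℕ}
    (A : Matrix (Fin n) (Fin n) ℝ) (N : Fin q → Matrix (Fin n) (Fin n) ℝ)
    (B : Matrix (Fin n) (Fin m) ℝ) (C : Matrix (Fin p) (Fin n) ℝ)
    (K : Matrix (Fin q) (Fin q) ℝ) :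
    (∃ P : Matrix (Fin n) (Fin n) ℝ, P.PosDef ∧
      (-(Aᵀ * P⁻¹ + P⁻¹ * A + (∑ i : Fin q, ∑ j : Fin q, K i j • ((N i)ᵀ * P⁻¹ * N j)) -
          Cᵀ * C + P⁻¹ * B * Bᵀ * P⁻¹)).PosDef) ↔
    (∃ X : Matrix (Fin n) (Fin n) ℝ, X.PosDef ∧
      (-(Aᵀ * X + X * A + (∑ i : Fin q, ∑ j : Fin q, K i j • ((N i)ᵀ * X * N j)) -
          Cᵀ * C)).PosDef) := by
  constructor
  · rintro ⟨P, hP, hric⟩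
    exact ⟨P⁻¹, hP.inv, posDef_neg_stochasticLyapunov_of_riccati B C hP.inv.1 hric⟩
  · rintro ⟨X, hX, hlyap⟩
    obtain ⟨c, hc, hric⟩ := exists_riccati_smul_of_stochasticLyapunov B C hX hlyap
    have hcX := hX.smul hc
    refine ⟨(c • X)⁻¹, hcX.inv, ?_⟩
    rwa [nonsing_inv_nonsing_inv _ ((isUnit_iff_isUnit_det _).1 hcX.isUnit)]

/-- The strict reachability Riccati-type inequality has a positive definite
solution iff the dual triple `(Aᵀ, Cᵀ, N_iᵀ)` is stabilizable (algebraic form). -/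
theorem stmt_3 {n m p q : ℕ}
    (A : Matrix (Fin n) (Fin n) ℝ) (N : Fin q → Matrix (Fin n) (Fin n) ℝ)
    (B : Matrix (Fin n) (Fin m) ℝ) (C : Matrix (Fin p) (Fin n) ℝ)
    (K : Matrix (Fin q) (Fin q) ℝ) (hK : K.PosSemidef) :
    (∃ P : Matrix (Fin n) (Fin n) ℝ, P.PosDef ∧
      (-(Aᵀ * P⁻¹ + P⁻¹ * A + (∑ i : Fin q, ∑ j : Fin q, K i j • ((N i)ᵀ * P⁻¹ * N j)) -
          Cᵀ * C + P⁻¹ * B * Bᵀ * P⁻¹)).PosDef) ↔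
    (∃ X : Matrix (Fin n) (Fin n) ℝ, X.PosDef ∧
      (-(Aᵀ * X + X * A + (∑ i : Fin q, ∑ j : Fin q, K i j • ((N i)ᵀ * X * N j)) -
          Cᵀ * C)).PosDef) :=
  stmt_3_general A N B C K
end

section
/- Let A, N_1, …, N_q ∈ ℝ^{n×n} and let K = (k_{ij}) ∈ ℝ^{q×q} be symmetric positive semidefinite. Define the linear map on symmetric n×n matrices T(X) = AᵀX + XA + Σ_{i,j=1}^q N_iᵀ X N_j k_{ij}. Then: (i) the map Π_N(X) = Σ_{i,j=1}^q N_iᵀ X N_j k_{ij} is positive, i.e., X ⪰ 0 implies Π_N(X) ⪰ 0; and (ii) T is resolvent positive: there exists α₀ ∈ ℝ such that for every α > α₀ the map α·id − T (on the space of symmetric n×n matrices) is invertible and maps the cone of positive semidefinite matrices onto a subset of itself under its inverse, i.e., (α·id − T)⁻¹(X) ⪰ 0 whenever X ⪰ 0. -/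
/-!
Writing `𝒩` for the block column `[N_1; …; N_q]`, one has `Π_N(X) = 𝒩ᵀ (K ⊗ X) 𝒩`, so `Π_N` is
positive because Kronecker products of positive semidefinite matrices are positive semidefinite.

Now let `T(X) = AᵀX + XA + Π(X)` with `Π` linear and positive. Suppose `X` is symmetric,
`αX - T(X) = Y ⪰ 0`, and the least eigenvalue `λ` of `X` is negative, with unit eigenvector `v`.
Since `X ⪰ λI` we get `Π(X) ⪰ λ Π(I)`, and the quadratic form at `v` gives
`0 ≤ vᵀYv ≤ λ (α - 2 vᵀAv - vᵀΠ(I)v)`, which is negative once `α > 2‖A‖ + ‖Π(I)‖`.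
Applied to `±X` with `Y = 0` this makes `α - T` injective, hence bijective, on symmetric matrices.
-/

open Matrix BigOperators
open scoped MatrixOrder Kronecker Matrix.Norms.L2Operator

namespace Matrix

variable {m ι : Type*} [Fintype m] [Fintype ι]

def blockColumn (N : ι → Matrix m m ℝ) : Matrix (ι × m) m ℝ :=
  Matrix.of fun p b => N p.1 p.2 b

lemma sum_smul_transpose_mul_mul_eq (N : ι → Matrix m m ℝ) (K : Matrix ι ι ℝ)
    (X : Matrix m m ℝ) :
    ∑ i, ∑ j, K i j • ((N i)ᵀ * X * N j) =
      (blockColumn N)ᵀ * (K ⊗ₖ X) * blockColumn N := by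
  ext b c
  simp only [blockColumn, Matrix.sum_apply, Matrix.smul_apply, mul_apply, transpose_apply,
    of_apply, kronecker_apply, Fintype.sum_prod_type, Finset.sum_mul, Finset.mul_sum, smul_eq_mul]
  rw [Finset.sum_comm]
  refine Finset.sum_congr rfl fun j _ => ?_
  rw [Finset.sum_comm]
  exact Finset.sum_congr rfl fun d _ => Finset.sum_congr rfl fun i _ =>
    Finset.sum_congr rfl fun a _ => by ring

lemma PosSemidef.sum_smul_transpose_mul_mul (N : ι → Matrix m m ℝ) {K : Matrix ι ι ℝ}
    (hK : K.PosSemidef) {X : Matrix m m ℝ} (hX : X.PosSemidef) :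
    (∑ i, ∑ j, K i j • ((N i)ᵀ * X * N j)).PosSemidef := by
  rw [sum_smul_transpose_mul_mul_eq]
  simpa [conjTranspose_eq_transpose_of_trivial] using
    (hK.kronecker hX).conjTranspose_mul_mul_same (blockColumn N)

def piN (N : ι → Matrix m m ℝ) (K : Matrix ι ι ℝ) :
    Matrix m m ℝ →ₗ[ℝ] Matrix m m ℝ where
  toFun X := ∑ i, ∑ j, K i j • ((N i)ᵀ * X * N j)
  map_add' X Y := by simp [Matrix.mul_add, Matrix.add_mul, Finset.sum_add_distrib]
  map_smul' c X := by simp [Finset.smul_sum, smul_comm c]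

lemma isSymm_transpose_mul_add_mul (A : Matrix m m ℝ) {X : Matrix m m ℝ} (hX : X.IsSymm) :
    (Aᵀ * X + X * A).IsSymm := by
  simp only [IsSymm, transpose_add, transpose_mul, transpose_transpose, hX.eq, add_comm]

def symmetricSubmodule (m R : Type*) [Semiring R] : Submodule R (Matrix m m R) where
  carrier := {X | X.IsSymm}
  add_mem' := IsSymm.add
  zero_mem' := isSymm_zero
  smul_mem' c _ h := h.smul c

lemma existsUnique_isSymm_apply_eq {K : Type*} [Field K] (Φ : Matrix m m K →ₗ[K] Matrix m m K)
    (hΦ : ∀ X, X.IsSymm → (Φ X).IsSymm) (hinj : ∀ X, X.IsSymm → Φ X = 0 → X = 0)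
    {Y : Matrix m m K} (hY : Y.IsSymm) : ∃! X, X.IsSymm ∧ Φ X = Y := by
  let Φs := Φ.restrict (p := symmetricSubmodule m K) (q := symmetricSubmodule m K) hΦ
  have hΦs : Function.Injective Φs := by
    rw [← LinearMap.ker_eq_bot, Submodule.eq_bot_iff]
    rintro ⟨X, hX⟩ h
    exact Subtype.ext (hinj X hX (congrArg Subtype.val h))
  obtain ⟨⟨X, hX⟩, hXY⟩ := LinearMap.injective_iff_surjective.mp hΦs ⟨Y, hY⟩
  have hΦX : Φ X = Y := congrArg Subtype.val hXY
  refine ⟨X, ⟨hX, hΦX⟩, fun X' ⟨hX', hΦX'⟩ => ?_⟩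
  exact sub_eq_zero.mp (hinj _ (hX'.sub hX) (by rw [map_sub, hΦX, hΦX', sub_self]))

lemma dotProduct_transpose_mul_add_mul_mulVec {A X : Matrix m m ℝ} (hX : X.IsSymm)
    {v : m → ℝ} {μ : ℝ} (hv : X *ᵥ v = μ • v) :
    v ⬝ᵥ (Aᵀ * X + X * A) *ᵥ v = 2 * μ * (v ⬝ᵥ A *ᵥ v) := by
  have hvX : v ᵥ* X = μ • v := by rw [← hX.eq, vecMul_transpose, hv]
  rw [add_mulVec, dotProduct_add, ← mulVec_mulVec, ← mulVec_mulVec, hv, mulVec_smul,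
    dotProduct_smul, dotProduct_mulVec v X, hvX, smul_dotProduct, dotProduct_mulVec,
    vecMul_transpose, dotProduct_comm (A *ᵥ v), smul_eq_mul]
  ring

variable [DecidableEq m]

lemma dotProduct_mulVec_le_l2_opNorm (M : Matrix m m ℝ) (v : EuclideanSpace ℝ m) :
    v.ofLp ⬝ᵥ M *ᵥ v.ofLp ≤ ‖M‖ * ‖v‖ ^ 2 := by
  calc v.ofLp ⬝ᵥ M *ᵥ v.ofLp = inner ℝ v (toEuclideanCLM (𝕜 := ℝ) M v) :=
        (inner_toEuclideanCLM M v v).symm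
    _ ≤ ‖v‖ * ‖toEuclideanCLM (𝕜 := ℝ) M v‖ := real_inner_le_norm _ _
    _ ≤ ‖v‖ * (‖M‖ * ‖v‖) := by gcongr; exact l2_opNorm_mulVec M v
    _ = ‖M‖ * ‖v‖ ^ 2 := by ring

lemma isSymm_map_of_posSemidef_map (P : Matrix m m ℝ →ₗ[ℝ] Matrix m m ℝ)
    (hP : ∀ X, X.PosSemidef → (P X).PosSemidef) {X : Matrix m m ℝ} (hX : X.IsSymm) :
    (P X).IsSymm := by
  obtain ⟨B, C, hB, hC, rfl⟩ :=
    (isHermitian_iff_isSymm.mpr hX).isSelfAdjoint.exists_nonneg_sub_nonneg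
  rw [map_sub, ← isHermitian_iff_isSymm]
  exact (hP B hB.posSemidef).isHermitian.sub (hP C hC.posSemidef).isHermitian

lemma IsHermitian.posSemidef_sub_smul_one {X : Matrix m m ℝ} (hX : X.IsHermitian) {c : ℝ}
    (hc : ∀ i, c ≤ hX.eigenvalues i) : (X - c • 1).PosSemidef := by
  have hle : algebraMap ℝ (Matrix m m ℝ) c ≤ X := by
    refine algebraMap_le_of_le_spectrum ?_ hX.isSelfAdjoint
    rw [hX.spectrum_real_eq_range_eigenvalues]
    rintro _ ⟨i, rfl⟩
    exact hc i
  simpa [le_iff, Algebra.algebraMap_eq_smul_one] using hle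

theorem posSemidef_of_posSemidef_smul_sub_lyapunov_add (A : Matrix m m ℝ)
    (P : Matrix m m ℝ →ₗ[ℝ] Matrix m m ℝ) (hP : ∀ X, X.PosSemidef → (P X).PosSemidef)
    {α : ℝ} (hα : 2 * ‖A‖ + ‖P 1‖ < α) {X : Matrix m m ℝ} (hX : X.IsSymm)
    (hY : (α • X - (Aᵀ * X + X * A + P X)).PosSemidef) : X.PosSemidef := by
  have hXh : X.IsHermitian := isHermitian_iff_isSymm.mpr hX
  by_contra hX_not
  obtain ⟨i, hi⟩ : ∃ i, hXh.eigenvalues i < 0 := by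
    simpa [hXh.posSemidef_iff_eigenvalues_nonneg, Pi.le_def] using hX_not
  obtain ⟨i₀, -, hmin⟩ :=
    Finset.exists_min_image Finset.univ hXh.eigenvalues ⟨i, Finset.mem_univ i⟩
  set μ := hXh.eigenvalues i₀
  set v := hXh.eigenvectorBasis i₀
  have hμ : μ < 0 := (hmin i (Finset.mem_univ i)).trans_lt hi
  have hv : X *ᵥ v.ofLp = μ • v.ofLp := hXh.mulVec_eigenvectorBasis i₀
  have hv_norm : ‖v‖ = 1 := hXh.eigenvectorBasis.orthonormal.1 i₀
  have hvv : v.ofLp ⬝ᵥ v.ofLp = 1 := by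
    have h := real_inner_self_eq_norm_sq v
    rw [hv_norm, one_pow] at h
    exact h
  have hPX : μ * (v.ofLp ⬝ᵥ P 1 *ᵥ v.ofLp) ≤ v.ofLp ⬝ᵥ P X *ᵥ v.ofLp := by
    have hXμ := hXh.posSemidef_sub_smul_one fun j => hmin j (Finset.mem_univ j)
    simpa [sub_mulVec, smul_mulVec] using (hP _ hXμ).dotProduct_mulVec_nonneg v.ofLp
  have hA := dotProduct_mulVec_le_l2_opNorm A v
  have hP1 := dotProduct_mulVec_le_l2_opNorm (P 1) v
  rw [hv_norm, one_pow, mul_one] at hA hP1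
  have hYv := hY.dotProduct_mulVec_nonneg v.ofLp
  rw [star_trivial, sub_mulVec, add_mulVec, dotProduct_sub, dotProduct_add,
    dotProduct_transpose_mul_add_mul_mulVec hX hv, smul_mulVec, dotProduct_smul, hv,
    dotProduct_smul, hvv, smul_eq_mul, smul_eq_mul, mul_one] at hYv
  have hgap : 0 < α - 2 * (v.ofLp ⬝ᵥ A *ᵥ v.ofLp) - v.ofLp ⬝ᵥ P 1 *ᵥ v.ofLp := by
    linarith
  nlinarith [mul_neg_of_neg_of_pos hμ hgap]

theorem resolventPositive_lyapunov_add (A : Matrix m m ℝ)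
    (P : Matrix m m ℝ →ₗ[ℝ] Matrix m m ℝ) (hP : ∀ X, X.PosSemidef → (P X).PosSemidef) :
    ∃ α₀ : ℝ, ∀ α : ℝ, α > α₀ →
      (∀ Y : Matrix m m ℝ, Y.IsSymm →
        ∃! X : Matrix m m ℝ, X.IsSymm ∧ α • X - (Aᵀ * X + X * A + P X) = Y) ∧
      (∀ X Y : Matrix m m ℝ, X.IsSymm → Y.PosSemidef →
        α • X - (Aᵀ * X + X * A + P X) = Y → X.PosSemidef) := by
  refine ⟨2 * ‖A‖ + ‖P 1‖, fun α hα => ⟨fun Y hY => ?_, fun X Y hX hY hXY =>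
    posSemidef_of_posSemidef_smul_sub_lyapunov_add A P hP hα hX (hXY ▸ hY)⟩⟩
  let Φ := α • LinearMap.id - (LinearMap.mulLeft ℝ Aᵀ + LinearMap.mulRight ℝ A + P)
  have hΦ : ∀ X, Φ X = α • X - (Aᵀ * X + X * A + P X) := fun X => rfl
  have hker : ∀ X, X.IsSymm → Φ X = 0 → X.PosSemidef := fun X hX hΦX =>
    posSemidef_of_posSemidef_smul_sub_lyapunov_add A P hP hα hX
      (by rw [← hΦ, hΦX]; exact .zero)
  simp only [← hΦ]
  refine existsUnique_isSymm_apply_eq Φ (fun X hX => ?_) (fun X hX hΦX => ?_) hY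
  · rw [hΦ]
    exact (hX.smul α).sub ((isSymm_transpose_mul_add_mul A hX).add
      (isSymm_map_of_posSemidef_map P hP hX))
  · have hneg : (-X).PosSemidef := hker (-X) hX.neg (by rw [map_neg, hΦX, neg_zero])
    exact le_antisymm (neg_nonneg.mp hneg.nonneg) (hker X hX hΦX).nonneg

end Matrix

/-- The map `Π_N` is positive and the generalized Lyapunov operator
`T(X) = AᵀX + XA + Σ_{i,j} N_iᵀ X N_j k_{ij}` is resolvent positive on the space
of symmetric matrices. -/
theorem stmt_5 {n q : ℕ}
    (A : Matrix (Fin n) (Fin n) ℝ) (N : Fin q → Matrix (Fin n) (Fin n) ℝ)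
    (K : Matrix (Fin q) (Fin q) ℝ) (hK : K.PosSemidef) :
    (∀ X : Matrix (Fin n) (Fin n) ℝ, X.PosSemidef →
      (∑ i : Fin q, ∑ j : Fin q, K i j • ((N i)ᵀ * X * N j)).PosSemidef) ∧
    (∃ α₀ : ℝ, ∀ α : ℝ, α > α₀ →
      (∀ Y : Matrix (Fin n) (Fin n) ℝ, Y.IsSymm →
        ∃! X : Matrix (Fin n) (Fin n) ℝ, X.IsSymm ∧
          α • X - (Aᵀ * X + X * A + ∑ i : Fin q, ∑ j : Fin q, K i j • ((N i)ᵀ * X * N j)) = Y) ∧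
      (∀ X Y : Matrix (Fin n) (Fin n) ℝ, X.IsSymm → Y.PosSemidef →
        α • X - (Aᵀ * X + X * A + ∑ i : Fin q, ∑ j : Fin q, K i j • ((N i)ᵀ * X * N j)) = Y →
        X.PosSemidef)) :=
  have hPiN (X : Matrix (Fin n) (Fin n) ℝ) (hX : X.PosSemidef) :=
    hK.sum_smul_transpose_mul_mul N hX
  ⟨hPiN, resolventPositive_lyapunov_add A (piN N K) hPiN⟩
end

section
/- Let P, Q ∈ ℝ^{n×n} be symmetric positive definite matrices. Then there exists an invertible matrix S ∈ ℝ^{n×n} such that S P Sᵀ = (Sᵀ)⁻¹ Q S⁻¹ = Σ, where Σ = diag(σ₁, …, σ_n) is diagonal with σ₁ ≥ σ₂ ≥ … ≥ σ_n > 0, and the numbers σ₁², …, σ_n² are exactly the eigenvalues of the product PQ (with multiplicity). -/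
open Matrix BigOperators Polynomial

/-!
Factor `P = L Lᵀ` with `L` invertible. Then `A = Lᵀ Q L` is positive definite and has the same
characteristic polynomial as `L Lᵀ Q = P Q`, so there is an orthogonal `V` with
`Vᵀ A V = diag τ`, where `τ` lists the eigenvalues of `P Q` in decreasing order. Put `σ = √τ`.
For `S = diag(√σ) Vᵀ L⁻¹` we have `S⁻¹ = L V diag(√σ)⁻¹`, hence `S P Sᵀ = diag(√σ)² = diag σ`
and `(Sᵀ)⁻¹ Q S⁻¹ = diag(√σ)⁻¹ diag(σ²) diag(√σ)⁻¹ = diag σ`.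
-/

namespace Matrix

variable {n : Type*} [Fintype n]

open scoped ComplexOrder MatrixOrder in
theorem PosDef.exists_isUnit_eq_mul_conjTranspose [DecidableEq n] {𝕜 : Type*} [RCLike 𝕜]
    {P : Matrix n n 𝕜} (hP : P.PosDef) : ∃ L : Matrix n n 𝕜, IsUnit L ∧ P = L * Lᴴ := by
  obtain ⟨B, rfl⟩ := CStarAlgebra.nonneg_iff_eq_star_mul_self.mp hP.posSemidef.nonneg
  refine ⟨Bᴴ, ?_, by rw [conjTranspose_conjTranspose, star_eq_conjTranspose]⟩
  have hdet := (isUnit_iff_isUnit_det _).mp hP.isUnit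
  rw [det_mul] at hdet
  exact (isUnit_iff_isUnit_det _).mpr (isUnit_of_mul_isUnit_left hdet)

theorem IsHermitian.transpose_eigenvectorUnitary_mul_self [DecidableEq n] {A : Matrix n n ℝ}
    (hA : A.IsHermitian) :
    (hA.eigenvectorUnitary : Matrix n n ℝ)ᵀ * hA.eigenvectorUnitary = 1 := by
  simpa [star_eq_conjTranspose] using Unitary.coe_star_mul_self hA.eigenvectorUnitary

theorem IsHermitian.transpose_eigenvectorUnitary_mul_mul [DecidableEq n] {A : Matrix n n ℝ}
    (hA : A.IsHermitian) :
    (hA.eigenvectorUnitary : Matrix n n ℝ)ᵀ * A * hA.eigenvectorUnitary =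
      diagonal hA.eigenvalues := by
  simpa [star_eq_conjTranspose] using hA.conjStarAlgAut_star_eigenvectorUnitary

theorem submatrix_transpose_mul_mul_submatrix {R : Type*} [CommSemiring R] (V A : Matrix n n R)
    (e : Equiv.Perm n) :
    (V.submatrix id e)ᵀ * A * V.submatrix id e = (Vᵀ * A * V).submatrix e e := by
  rw [transpose_submatrix, ← submatrix_mul_equiv (Vᵀ * A) V e (Equiv.refl n) e]
  rfl

theorem _root_.Tuple.antitone_comp_revPerm_trans_sort {α : Type*} [LinearOrder α] {m : ℕ}
    (f : Fin m → α) : Antitone (f ∘ Fin.revPerm.trans (Tuple.sort f)) :=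
  (Tuple.monotone_sort f).comp_antitone Fin.rev_anti

theorem IsHermitian.exists_orthogonal_antitone_diagonalization {m : ℕ}
    {A : Matrix (Fin m) (Fin m) ℝ} (hA : A.IsHermitian) :
    ∃ e : Equiv.Perm (Fin m), Antitone (hA.eigenvalues ∘ e) ∧
      ∃ V : Matrix (Fin m) (Fin m) ℝ, Vᵀ * V = 1 ∧ Vᵀ * A * V = diagonal (hA.eigenvalues ∘ e) := by
  set e := Fin.revPerm.trans (Tuple.sort hA.eigenvalues)
  set U : Matrix (Fin m) (Fin m) ℝ := ↑hA.eigenvectorUnitary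
  refine ⟨e, Tuple.antitone_comp_revPerm_trans_sort _, U.submatrix id e, ?_, ?_⟩
  · rw [← mul_one (U.submatrix id e)ᵀ, submatrix_transpose_mul_mul_submatrix, mul_one,
      hA.transpose_eigenvectorUnitary_mul_self, submatrix_one_equiv]
  · rw [submatrix_transpose_mul_mul_submatrix, hA.transpose_eigenvectorUnitary_mul_mul,
      submatrix_diagonal_equiv]

section Balancing

variable [DecidableEq n] {K : Type*} [Field K] {L V : Matrix n n K} {d : n → K}

noncomputable def balancingTransform (L V : Matrix n n K) (d : n → K) : Matrix n n K :=
  diagonal d * Vᵀ * L⁻¹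

theorem balancingTransform_mul_eq_one (hL : IsUnit L) (hV : Vᵀ * V = 1) (hd : ∀ i, d i ≠ 0) :
    balancingTransform L V d * (L * V * diagonal d⁻¹) = 1 := by
  calc _ = diagonal d * (Vᵀ * (L⁻¹ * L) * V) * diagonal d⁻¹ := by
        simp only [balancingTransform, mul_assoc]
    _ = 1 := by simp [nonsing_inv_mul _ ((isUnit_iff_isUnit_det _).mp hL), hV, hd]

theorem balancingTransform_mul_mul_transpose (hL : IsUnit L) (hV : Vᵀ * V = 1) :
    balancingTransform L V d * (L * Lᵀ) * (balancingTransform L V d)ᵀ = diagonal (d * d) := by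
  have hL' : IsUnit L.det := (isUnit_iff_isUnit_det _).mp hL
  calc _ = diagonal d * (Vᵀ * ((L⁻¹ * L) * (Lᵀ * Lᵀ⁻¹)) * V) * diagonal d := by
        simp only [balancingTransform, transpose_mul, transpose_nonsing_inv, diagonal_transpose,
          transpose_transpose, mul_assoc]
    _ = diagonal (d * d) := by
        rw [nonsing_inv_mul _ hL', mul_nonsing_inv _ (by rwa [det_transpose]), mul_one, mul_one,
          hV, mul_one, diagonal_mul_diagonal]
        rfl

theorem transpose_inv_mul_mul_inv_of_mul_eq_one {S T : Matrix n n K} (h : S * T = 1)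
    (Q : Matrix n n K) : Sᵀ⁻¹ * Q * S⁻¹ = Tᵀ * Q * T := by
  rw [← transpose_nonsing_inv, inv_eq_right_inv h]

theorem transpose_mul_mul_self_mul_diagonal (Q : Matrix n n K) (c : n → K) :
    (L * V * diagonal c)ᵀ * Q * (L * V * diagonal c) =
      diagonal c * (Vᵀ * (Lᵀ * Q * L) * V) * diagonal c := by
  simp only [transpose_mul, diagonal_transpose, mul_assoc]

end Balancing

theorem exists_balancing_of_diagonalization [DecidableEq n] {L V Q : Matrix n n ℝ} {σ : n → ℝ}
    (hL : IsUnit L) (hV : Vᵀ * V = 1) (hσ : ∀ i, 0 < σ i)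
    (hdiag : Vᵀ * (Lᵀ * Q * L) * V = diagonal (σ * σ)) :
    ∃ S : Matrix n n ℝ, IsUnit S ∧ S * (L * Lᵀ) * Sᵀ = diagonal σ ∧
      Sᵀ⁻¹ * Q * S⁻¹ = diagonal σ := by
  set d : n → ℝ := fun i => √(σ i)
  have hd : ∀ i, d i ≠ 0 := fun i => (Real.sqrt_pos.mpr (hσ i)).ne'
  have hdd : d * d = σ := funext fun i => Real.mul_self_sqrt (hσ i).le
  have hST := balancingTransform_mul_eq_one hL hV hd
  refine ⟨_, IsUnit.of_mul_eq_one _ hST, ?_, ?_⟩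
  · rw [balancingTransform_mul_mul_transpose hL hV, hdd]
  · rw [transpose_inv_mul_mul_inv_of_mul_eq_one hST, transpose_mul_mul_self_mul_diagonal, hdiag,
      diagonal_mul_diagonal, diagonal_mul_diagonal, ← hdd]
    congr 1
    funext i
    simp only [Pi.mul_apply, Pi.inv_apply]
    field_simp [hd i]

end Matrix

/-- Simultaneous balancing of two symmetric positive definite Gramians: there is
an invertible `S` making `S P Sᵀ` and `(Sᵀ)⁻¹ Q S⁻¹` equal to the same positive
diagonal matrix whose squared entries are the eigenvalues of `P Q` (with
multiplicity, encoded via the characteristic polynomial). -/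
theorem stmt_7 {n : ℕ} (P Q : Matrix (Fin n) (Fin n) ℝ)
    (hP : P.PosDef) (hQ : Q.PosDef) :
    ∃ S : Matrix (Fin n) (Fin n) ℝ, IsUnit S ∧
    ∃ σ : Fin n → ℝ,
      (∀ i j : Fin n, i ≤ j → σ j ≤ σ i) ∧
      (∀ i : Fin n, 0 < σ i) ∧
      S * P * Sᵀ = Matrix.diagonal σ ∧
      (Sᵀ)⁻¹ * Q * S⁻¹ = Matrix.diagonal σ ∧
      (P * Q).charpoly = ∏ i : Fin n, (X - C (σ i ^ 2)) := by
  obtain ⟨L, hL, rfl⟩ : ∃ L, IsUnit L ∧ P = L * Lᵀ := by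
    simpa using hP.exists_isUnit_eq_mul_conjTranspose
  have hA : (Lᵀ * Q * L).PosDef := by
    simpa using hQ.conjTranspose_mul_mul_same (mulVec_injective_of_isUnit hL)
  obtain ⟨e, hanti, V, hV, hdiag⟩ := hA.isHermitian.exists_orthogonal_antitone_diagonalization
  set τ := hA.isHermitian.eigenvalues ∘ e
  have hτ : ∀ i, 0 < τ i := fun i => hA.eigenvalues_pos (e i)
  set σ : Fin n → ℝ := fun i => √(τ i)
  have hσ : ∀ i, 0 < σ i := fun i => Real.sqrt_pos.mpr (hτ i)
  have hστ : σ * σ = τ := funext fun i => Real.mul_self_sqrt (hτ i).le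
  obtain ⟨S, hS, hSP, hSQ⟩ := exists_balancing_of_diagonalization hL hV hσ (hστ ▸ hdiag)
  refine ⟨S, hS, σ, fun i j hij => Real.sqrt_le_sqrt (hanti hij), hσ, hSP, hSQ, ?_⟩
  rw [mul_assoc, charpoly_mul_comm, hA.isHermitian.charpoly_eq, ← Equiv.prod_comp e]
  refine Finset.prod_congr rfl fun i _ => ?_
  rw [Real.sq_sqrt (hτ i).le]
  rfl
end

section
/- Let A, N_1, …, N_q ∈ ℝ^{n×n}, B ∈ ℝ^{n×m}, C ∈ ℝ^{p×n}, and let K = (k_{ij}) ∈ ℝ^{q×q} be symmetric positive semidefinite. Let Σ be a symmetric positive definite matrix satisfying AᵀΣ + ΣA + Σ_{i,j=1}^q N_iᵀ Σ N_j k_{ij} + CᵀC − ΣBBᵀΣ = 0 and AᵀΣ⁻¹ + Σ⁻¹A + Σ_{i,j=1}^q N_iᵀ Σ⁻¹ N_j k_{ij} − CᵀC + Σ⁻¹BBᵀΣ⁻¹ ⪯ 0. Set Ā = A − BBᵀΣ and Υ = (Σ + Σ⁻¹)⁻¹. Then the following two inequalities hold: ĀᵀΥ⁻¹ + Υ⁻¹Ā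 + Σ_{i,j=1}^q N_iᵀ Υ⁻¹ N_j k_{ij} ⪯ −Υ⁻¹BBᵀΥ⁻¹, and ĀᵀΣ + ΣĀ + Σ_{i,j=1}^q N_iᵀ Σ N_j k_{ij} ⪯ −CᵀC − ΣBBᵀΣ. In other words, Υ and Σ are (unbalanced) type-II Gramians of the closed-loop system with coefficients (A − BBᵀΣ, N_i, B, [−BᵀΣ; C]). -/
/-!
Both claims are algebraic identities. The generalized Lyapunov operator `L_Ā` of the closed loop
`Ā = A - BBᵀΣ` is `L_A X - (ΣBBᵀX + XBBᵀΣ)`. At `X = Σ` the second residual is minus the Riccati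
equation, hence zero. At `X = Υ⁻¹ = Σ + Σ⁻¹` the cross terms `ΣBBᵀΣ⁻¹`, `Σ⁻¹BBᵀΣ` cancel, and the
first residual splits into the Riccati residual at `Σ` plus the assumed dual inequality at `Σ⁻¹`.
-/

open Matrix BigOperators

section LyapunovMap

variable {ι κ μ ν R : Type*} [Fintype ι] [Fintype κ] [Fintype μ] [Fintype ν] [CommRing R]

def lyapunovMap (A : Matrix ι ι R) (N : κ → Matrix ι ι R) (K : Matrix κ κ R)
    (X : Matrix ι ι R) : Matrix ι ι R :=
  Aᵀ * X + X * A + ∑ i, ∑ j, K i j • ((N i)ᵀ * X * N j)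

lemma lyapunovMap_add (A : Matrix ι ι R) (N : κ → Matrix ι ι R) (K : Matrix κ κ R)
    (X Y : Matrix ι ι R) :
    lyapunovMap A N K (X + Y) = lyapunovMap A N K X + lyapunovMap A N K Y := by
  simp only [lyapunovMap, Matrix.mul_add, Matrix.add_mul, smul_add, Finset.sum_add_distrib]
  abel

lemma lyapunovMap_sub_left (A D : Matrix ι ι R) (N : κ → Matrix ι ι R) (K : Matrix κ κ R)
    (X : Matrix ι ι R) :
    lyapunovMap (A - D) N K X = lyapunovMap A N K X - (Dᵀ * X + X * D) := by
  simp only [lyapunovMap, Matrix.transpose_sub, Matrix.sub_mul, Matrix.mul_sub]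
  abel

lemma lyapunovMap_closedLoop (A : Matrix ι ι R) (N : κ → Matrix ι ι R) (K : Matrix κ κ R)
    (B : Matrix ι μ R) {S : Matrix ι ι R} (hS : Sᵀ = S) (X : Matrix ι ι R) :
    lyapunovMap (A - B * Bᵀ * S) N K X =
      lyapunovMap A N K X - (S * B * Bᵀ * X + X * B * Bᵀ * S) := by
  rw [lyapunovMap_sub_left]
  simp only [Matrix.transpose_mul, Matrix.transpose_transpose, hS, Matrix.mul_assoc]

lemma closedLoop_observability_eq (A : Matrix ι ι R) (N : κ → Matrix ι ι R) (K : Matrix κ κ R)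
    (B : Matrix ι μ R) (C : Matrix ν ι R) {S : Matrix ι ι R} (hS : Sᵀ = S) :
    -(Cᵀ * C) - S * B * Bᵀ * S - lyapunovMap (A - B * Bᵀ * S) N K S =
      -(lyapunovMap A N K S + Cᵀ * C - S * B * Bᵀ * S) := by
  rw [lyapunovMap_closedLoop A N K B hS]
  abel

lemma closedLoop_reachability_eq (A : Matrix ι ι R) (N : κ → Matrix ι ι R)
    (K : Matrix κ κ R) (B : Matrix ι μ R) (C : Matrix ν ι R) {S : Matrix ι ι R} (hS : Sᵀ = S)
    (T : Matrix ι ι R) :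
    -((S + T) * B * Bᵀ * (S + T)) - lyapunovMap (A - B * Bᵀ * S) N K (S + T) =
      -(lyapunovMap A N K T - Cᵀ * C + T * B * Bᵀ * T) -
        (lyapunovMap A N K S + Cᵀ * C - S * B * Bᵀ * S) := by
  rw [lyapunovMap_closedLoop A N K B hS, lyapunovMap_add]
  simp only [Matrix.mul_add, Matrix.add_mul]
  abel

end LyapunovMap

theorem stmt_10_general {n m p q : ℕ}
    (A : Matrix (Fin n) (Fin n) ℝ) (N : Fin q → Matrix (Fin n) (Fin n) ℝ)
    (B : Matrix (Fin n) (Fin m) ℝ) (C : Matrix (Fin p) (Fin n) ℝ)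
    (K : Matrix (Fin q) (Fin q) ℝ)
    (S : Matrix (Fin n) (Fin n) ℝ) (hS : S.PosDef)
    (hric : Aᵀ * S + S * A + (∑ i : Fin q, ∑ j : Fin q, K i j • ((N i)ᵀ * S * N j)) +
      Cᵀ * C - S * B * Bᵀ * S = 0)
    (hineq : (-(Aᵀ * S⁻¹ + S⁻¹ * A +
      (∑ i : Fin q, ∑ j : Fin q, K i j • ((N i)ᵀ * S⁻¹ * N j)) -
      Cᵀ * C + S⁻¹ * B * Bᵀ * S⁻¹)).PosSemidef) :
    (-( ((S + S⁻¹)⁻¹)⁻¹ * B * Bᵀ * ((S + S⁻¹)⁻¹)⁻¹) -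
      ((A - B * Bᵀ * S)ᵀ * ((S + S⁻¹)⁻¹)⁻¹ + ((S + S⁻¹)⁻¹)⁻¹ * (A - B * Bᵀ * S) +
        ∑ i : Fin q, ∑ j : Fin q,
          K i j • ((N i)ᵀ * ((S + S⁻¹)⁻¹)⁻¹ * N j))).PosSemidef ∧
    (-(Cᵀ * C) - S * B * Bᵀ * S -
      ((A - B * Bᵀ * S)ᵀ * S + S * (A - B * Bᵀ * S) +
        ∑ i : Fin q, ∑ j : Fin q, K i j • ((N i)ᵀ * S * N j))).PosSemidef := by
  have hSt : Sᵀ = S := hS.isHermitian.eq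
  have hUpsilon : ((S + S⁻¹)⁻¹)⁻¹ = S + S⁻¹ :=
    nonsing_inv_nonsing_inv _ (isUnit_iff_ne_zero.mpr (hS.add hS.inv).det_pos.ne')
  have hreach := closedLoop_reachability_eq A N K B C hSt S⁻¹
  have hobs := closedLoop_observability_eq A N K B C hSt
  simp only [lyapunovMap] at hreach hobs
  rw [hUpsilon, hreach, hobs, hric, sub_zero, neg_zero]
  exact ⟨hineq, PosSemidef.zero⟩

/-- `Υ = (Σ + Σ⁻¹)⁻¹` and `Σ` are (unbalanced) type-II Gramians of the
closed-loop system `(A − BBᵀΣ, N_i, B, [−BᵀΣ; C])`. -/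
theorem stmt_10 {n m p q : ℕ}
    (A : Matrix (Fin n) (Fin n) ℝ) (N : Fin q → Matrix (Fin n) (Fin n) ℝ)
    (B : Matrix (Fin n) (Fin m) ℝ) (C : Matrix (Fin p) (Fin n) ℝ)
    (K : Matrix (Fin q) (Fin q) ℝ) (hK : K.PosSemidef)
    (S : Matrix (Fin n) (Fin n) ℝ) (hS : S.PosDef)
    (hric : Aᵀ * S + S * A + (∑ i : Fin q, ∑ j : Fin q, K i j • ((N i)ᵀ * S * N j)) +
      Cᵀ * C - S * B * Bᵀ * S = 0)
    (hineq : (-(Aᵀ * S⁻¹ + S⁻¹ * A +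
      (∑ i : Fin q, ∑ j : Fin q, K i j • ((N i)ᵀ * S⁻¹ * N j)) -
      Cᵀ * C + S⁻¹ * B * Bᵀ * S⁻¹)).PosSemidef) :
    (-( ((S + S⁻¹)⁻¹)⁻¹ * B * Bᵀ * ((S + S⁻¹)⁻¹)⁻¹) -
      ((A - B * Bᵀ * S)ᵀ * ((S + S⁻¹)⁻¹)⁻¹ + ((S + S⁻¹)⁻¹)⁻¹ * (A - B * Bᵀ * S) +
        ∑ i : Fin q, ∑ j : Fin q,
          K i j • ((N i)ᵀ * ((S + S⁻¹)⁻¹)⁻¹ * N j))).PosSemidef ∧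
    (-(Cᵀ * C) - S * B * Bᵀ * S -
      ((A - B * Bᵀ * S)ᵀ * S + S * (A - B * Bᵀ * S) +
        ∑ i : Fin q, ∑ j : Fin q, K i j • ((N i)ᵀ * S * N j))).PosSemidef :=
  stmt_10_general A N B C K S hS hric hineq
end

section
/- Let A, N_1, …, N_q ∈ ℝ^{n×n}, B ∈ ℝ^{n×m}, C ∈ ℝ^{p×n}, and let K = (k_{ij}) ∈ ℝ^{q×q} be symmetric positive semidefinite. Let Σ = diag(Σ_r, Σ_{2}) be a positive definite diagonal matrix, r < n, satisfying AᵀΣ + ΣA + Σ_{i,j=1}^q N_iᵀ Σ N_j k_{ij} + CᵀC − ΣBBᵀΣ = 0 and AᵀΣ⁻¹ + Σ⁻¹A + Σ_{i,j=1}^q N_iᵀ Σ⁻¹ N_j k_{ij} − CᵀC + Σ⁻¹BBᵀΣ⁻¹ ⪯ 0. Let A_r, N_{i,r} denote the leading r×r blocks of A and N_i, B_r the first r rows of B, and C_r the first r columns of C. Then the reduced quantities satisfy: A_rᵀΣ_r + Σ_rA_r + Σ_{i,j=1}^q N_{i,r}ᵀ Σ_r N_{j,r} k_{ij} + C_rᵀC_r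 − Σ_rB_rB_rᵀΣ_r ⪯ 0 and A_rᵀΣ_r⁻¹ + Σ_r⁻¹A_r + Σ_{i,j=1}^q N_{i,r}ᵀ Σ_r⁻¹ N_{j,r} k_{ij} − C_rᵀC_r + Σ_r⁻¹B_rB_rᵀΣ_r⁻¹ ⪯ 0. -/
/-!
Since `Σ = diag(Σ_r, Σ₂)` is diagonal, every term of both Riccati expressions compresses exactly
to its reduced counterpart, except the noise term: the leading block of `∑ k_ij N_iᵀ Σ N_j` is
`∑ k_ij N_{i,r}ᵀ Σ_r N_{j,r} + ∑ k_ij N_{i,21}ᵀ Σ₂ N_{j,21}`. The surplus equals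
`𝒩ᵀ (K ⊗ Σ₂) 𝒩` for the block column `𝒩` of the `N_{i,21}`, hence is positive semidefinite.
So the leading block of the Riccati equation makes the reduced Riccati expression the negative
of a positive semidefinite matrix, and the leading block of the Riccati inequality for `Σ⁻¹`
(itself negative semidefinite) plus the same kind of surplus gives the second inequality.
-/

open Matrix BigOperators
open scoped Kronecker

theorem Function.Injective.sum_add_sum_compl_range {ι κ M : Type*} [Fintype ι] [Fintype κ]
    [AddCommMonoid M] {e : κ → ι} [Fintype {k // k ∉ Set.range e}] (he : Function.Injective e)
    (f : ι → M) : ∑ c, f (e c) + ∑ k : {k // k ∉ Set.range e}, f k = ∑ k, f k := by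
  classical
  rw [← Finset.sum_add_sum_compl (Finset.univ.map ⟨e, he⟩) f, Finset.sum_map,
    Finset.sum_subtype _ (p := (· ∉ Set.range e)) fun k => by simp]
  rfl

namespace Matrix

theorem submatrix_sum {ι κ μ ν α β : Type*} [AddCommMonoid α] (s : Finset β)
    (X : β → Matrix ι ν α) (f : μ → ι) (g : κ → ν) :
    (∑ b ∈ s, X b).submatrix f g = ∑ b ∈ s, (X b).submatrix f g := by
  ext; simp [Matrix.sum_apply]

variable {ι κ μ ν α : Type*} [Semiring α]

theorem submatrix_diagonal_mul [Fintype ι] [Fintype κ] [DecidableEq ι] [DecidableEq κ]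
    (d : ι → α) (X : Matrix ι ν α) (f : κ → ι) (g : μ → ν) :
    (diagonal d * X).submatrix f g = diagonal (d ∘ f) * X.submatrix f g := by
  ext; simp [diagonal_mul]

theorem submatrix_mul_diagonal [Fintype ι] [Fintype κ] [DecidableEq ι] [DecidableEq κ]
    (d : ι → α) (X : Matrix ν ι α) (f : μ → ν) (g : κ → ι) :
    (X * diagonal d).submatrix f g = X.submatrix f g * diagonal (d ∘ g) := by
  ext; simp [mul_diagonal]

theorem submatrix_transpose_mul [Fintype ι] (X Y : Matrix ι ν α) (f g : μ → ν) :
    (Xᵀ * Y).submatrix f g = (X.submatrix id f)ᵀ * Y.submatrix id g := by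
  rw [submatrix_mul _ _ f id g Function.bijective_id, transpose_submatrix]

theorem submatrix_mul_transpose [Fintype ι] (X Y : Matrix ν ι α) (f g : μ → ν) :
    (X * Yᵀ).submatrix f g = X.submatrix f id * (Y.submatrix g id)ᵀ := by
  rw [submatrix_mul _ _ f id g Function.bijective_id, transpose_submatrix]

/- `{k // k ∉ Set.range e}` indexes the states discarded by `e`, so the second summand is the
paper's `X₂₁ᵀ Σ₂ Y₂₁`. -/
theorem submatrix_transpose_mul_diagonal_mul [Fintype ι] [Fintype κ] [DecidableEq ι]
    [DecidableEq κ] {e : κ → ι} [Fintype {k // k ∉ Set.range e}] (he : Function.Injective e)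
    (d : ι → α) (X Y : Matrix ι ι α) :
    (Xᵀ * diagonal d * Y).submatrix e e =
      (X.submatrix e e)ᵀ * diagonal (d ∘ e) * Y.submatrix e e +
        (X.submatrix (Subtype.val : {k // k ∉ Set.range e} → ι) e)ᵀ *
          diagonal (d ∘ (Subtype.val : {k // k ∉ Set.range e} → ι)) *
          Y.submatrix (Subtype.val : {k // k ∉ Set.range e} → ι) e := by
  ext a b
  rw [submatrix_apply, add_apply, mul_apply, mul_apply, mul_apply]
  simp only [mul_diagonal, transpose_apply, submatrix_apply, Function.comp_apply]
  exact (he.sum_add_sum_compl_range fun k => X k (e a) * d k * Y k (e b)).symm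

theorem submatrix_sum_sum_smul_transpose_mul_diagonal_mul {ρ : Type*} [Fintype ρ] [Fintype ι]
    [Fintype κ] [DecidableEq ι] [DecidableEq κ] {e : κ → ι} [Fintype {k // k ∉ Set.range e}]
    (he : Function.Injective e) (K : Matrix ρ ρ α) (N : ρ → Matrix ι ι α) (d : ι → α) :
    (∑ i, ∑ j, K i j • ((N i)ᵀ * diagonal d * N j)).submatrix e e =
      ∑ i, ∑ j, K i j • (((N i).submatrix e e)ᵀ * diagonal (d ∘ e) * (N j).submatrix e e) +
        ∑ i, ∑ j, K i j • (((N i).submatrix (Subtype.val : {k // k ∉ Set.range e} → ι) e)ᵀ *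
          diagonal (d ∘ (Subtype.val : {k // k ∉ Set.range e} → ι)) *
          (N j).submatrix (Subtype.val : {k // k ∉ Set.range e} → ι) e) := by
  simp only [submatrix_sum, submatrix_smul, Pi.smul_apply,
    submatrix_transpose_mul_diagonal_mul he, smul_add, Finset.sum_add_distrib]

theorem inv_diagonal_of_ne_zero [Fintype ι] [DecidableEq ι] {K : Type*} [Field K] {d : ι → K}
    (hd : ∀ i, d i ≠ 0) : (diagonal d)⁻¹ = diagonal d⁻¹ :=
  inv_eq_left_inv <| by
    rw [diagonal_mul_diagonal, ← diagonal_one]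
    exact congrArg diagonal (funext fun i => inv_mul_cancel₀ (hd i))

theorem posSemidef_sum_sum_smul_transpose_mul_mul {ρ : Type*} [Fintype ρ] [Fintype μ]
    [Fintype ν] {K : Matrix ρ ρ ℝ} (hK : K.PosSemidef) {D : Matrix μ μ ℝ} (hD : D.PosSemidef)
    (N : ρ → Matrix μ ν ℝ) : (∑ i, ∑ j, K i j • ((N i)ᵀ * D * N j)).PosSemidef := by
  let S : Matrix (ρ × μ) ν ℝ := of fun p v => N p.1 p.2 v
  have hS : ∑ i, ∑ j, K i j • ((N i)ᵀ * D * N j) = Sᴴ * (K ⊗ₖ D) * S := by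
    ext u v
    simp only [S, mul_apply, Matrix.sum_apply, Matrix.smul_apply, Fintype.sum_prod_type,
      Finset.mul_sum, Finset.sum_mul, conjTranspose_apply, kroneckerMap_apply, of_apply,
      transpose_apply, star_trivial, smul_eq_mul]
    rw [Finset.sum_comm]
    refine Finset.sum_congr rfl fun j _ => ?_
    rw [Finset.sum_comm]
    exact Finset.sum_congr rfl fun l _ => Finset.sum_congr rfl fun i _ =>
      Finset.sum_congr rfl fun k _ => by ring
  rw [hS]
  exact (hK.kronecker hD).conjTranspose_mul_mul_same S

theorem posSemidef_sum_sum_smul_submatrix_compl_range {ρ : Type*} [Fintype ρ] [Fintype κ]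
    [DecidableEq ι] {e : κ → ι} [Fintype {k // k ∉ Set.range e}] {K : Matrix ρ ρ ℝ}
    (hK : K.PosSemidef) {d : ι → ℝ} (hd : 0 ≤ d) (N : ρ → Matrix ι ι ℝ) :
    (∑ i, ∑ j, K i j • (((N i).submatrix (Subtype.val : {k // k ∉ Set.range e} → ι) e)ᵀ *
      diagonal (d ∘ (Subtype.val : {k // k ∉ Set.range e} → ι)) *
      (N j).submatrix (Subtype.val : {k // k ∉ Set.range e} → ι) e)).PosSemidef :=
  posSemidef_sum_sum_smul_transpose_mul_mul hK (PosSemidef.diagonal (d := d ∘ Subtype.val)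
    fun k => hd k) _

end Matrix

section Compression

variable {ι κ ρ μ ν : Type*} [Fintype ι] [DecidableEq ι] [Fintype κ] [DecidableEq κ] [Fintype ρ]
  [Fintype μ] [Fintype ν] {e : κ → ι} [Fintype {k // k ∉ Set.range e}]
  {A : Matrix ι ι ℝ} {N : ρ → Matrix ι ι ℝ} {B : Matrix ι μ ℝ} {C : Matrix ν ι ℝ}
  {K : Matrix ρ ρ ℝ} {d : ι → ℝ}

theorem posSemidef_neg_submatrix_riccati (he : Function.Injective e) (hK : K.PosSemidef)
    (hd : 0 ≤ d)
    (hric : Aᵀ * diagonal d + diagonal d * A +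
      (∑ i, ∑ j, K i j • ((N i)ᵀ * diagonal d * N j)) +
      Cᵀ * C - diagonal d * B * Bᵀ * diagonal d = 0) :
    (-((A.submatrix e e)ᵀ * diagonal (d ∘ e) + diagonal (d ∘ e) * A.submatrix e e +
      (∑ i, ∑ j, K i j • (((N i).submatrix e e)ᵀ * diagonal (d ∘ e) * (N j).submatrix e e)) +
      (C.submatrix id e)ᵀ * C.submatrix id e -
      diagonal (d ∘ e) * B.submatrix e id * (B.submatrix e id)ᵀ *
        diagonal (d ∘ e))).PosSemidef := by
  have h := congrArg (·.submatrix e e) hric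
  simp only [submatrix_add, submatrix_sub, submatrix_zero, Pi.add_apply, Pi.sub_apply,
    Pi.zero_apply, submatrix_mul_diagonal, submatrix_diagonal_mul, submatrix_transpose_mul,
    submatrix_mul_transpose, submatrix_sum_sum_smul_transpose_mul_diagonal_mul he,
    ← transpose_submatrix] at h
  convert posSemidef_sum_sum_smul_submatrix_compl_range (e := e) hK hd N using 2
  rw [neg_eq_iff_add_eq_zero, ← h]
  abel

theorem posSemidef_neg_submatrix_dual_riccati (he : Function.Injective e) (hK : K.PosSemidef)
    (hd : 0 ≤ d)
    (hineq : (-(Aᵀ * diagonal d + diagonal d * A +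
      (∑ i, ∑ j, K i j • ((N i)ᵀ * diagonal d * N j)) -
      Cᵀ * C + diagonal d * B * Bᵀ * diagonal d)).PosSemidef) :
    (-((A.submatrix e e)ᵀ * diagonal (d ∘ e) + diagonal (d ∘ e) * A.submatrix e e +
      (∑ i, ∑ j, K i j • (((N i).submatrix e e)ᵀ * diagonal (d ∘ e) * (N j).submatrix e e)) -
      (C.submatrix id e)ᵀ * C.submatrix id e +
      diagonal (d ∘ e) * B.submatrix e id * (B.submatrix e id)ᵀ *
        diagonal (d ∘ e))).PosSemidef := by
  have h := hineq.submatrix e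
  simp only [submatrix_neg, submatrix_add, submatrix_sub, Pi.neg_apply, Pi.add_apply,
    Pi.sub_apply, submatrix_mul_diagonal, submatrix_diagonal_mul, submatrix_transpose_mul,
    submatrix_mul_transpose, submatrix_sum_sum_smul_transpose_mul_diagonal_mul he,
    ← transpose_submatrix] at h
  convert h.add (posSemidef_sum_sum_smul_submatrix_compl_range (e := e) hK hd N) using 2
  abel

end Compression

/-- Truncation of a balanced realization: the leading blocks satisfy the reduced
Riccati inequalities with the leading block of the balanced Gramian. -/
theorem stmt_11 {n m p q r : ℕ} (hr : r < n)
    (A : Matrix (Fin n) (Fin n) ℝ) (N : Fin q → Matrix (Fin n) (Fin n) ℝ)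
    (B : Matrix (Fin n) (Fin m) ℝ) (C : Matrix (Fin p) (Fin n) ℝ)
    (K : Matrix (Fin q) (Fin q) ℝ) (hK : K.PosSemidef)
    (σ : Fin n → ℝ) (hσpos : ∀ i, 0 < σ i)
    (hric : Aᵀ * Matrix.diagonal σ + Matrix.diagonal σ * A +
      (∑ i : Fin q, ∑ j : Fin q, K i j • ((N i)ᵀ * Matrix.diagonal σ * N j)) +
      Cᵀ * C - Matrix.diagonal σ * B * Bᵀ * Matrix.diagonal σ = 0)
    (hineq : (-(Aᵀ * (Matrix.diagonal σ)⁻¹ + (Matrix.diagonal σ)⁻¹ * A +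
      (∑ i : Fin q, ∑ j : Fin q, K i j • ((N i)ᵀ * (Matrix.diagonal σ)⁻¹ * N j)) -
      Cᵀ * C + (Matrix.diagonal σ)⁻¹ * B * Bᵀ * (Matrix.diagonal σ)⁻¹)).PosSemidef) :
    (-(((A.submatrix (Fin.castLE hr.le) (Fin.castLE hr.le))ᵀ *
        Matrix.diagonal (σ ∘ Fin.castLE hr.le) +
      Matrix.diagonal (σ ∘ Fin.castLE hr.le) *
        A.submatrix (Fin.castLE hr.le) (Fin.castLE hr.le) +
      (∑ i : Fin q, ∑ j : Fin q,
        K i j • (((N i).submatrix (Fin.castLE hr.le) (Fin.castLE hr.le))ᵀ *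
          Matrix.diagonal (σ ∘ Fin.castLE hr.le) *
          (N j).submatrix (Fin.castLE hr.le) (Fin.castLE hr.le))) +
      (C.submatrix id (Fin.castLE hr.le))ᵀ * C.submatrix id (Fin.castLE hr.le) -
      Matrix.diagonal (σ ∘ Fin.castLE hr.le) * B.submatrix (Fin.castLE hr.le) id *
        (B.submatrix (Fin.castLE hr.le) id)ᵀ *
        Matrix.diagonal (σ ∘ Fin.castLE hr.le)))).PosSemidef ∧
    (-(((A.submatrix (Fin.castLE hr.le) (Fin.castLE hr.le))ᵀ *
        (Matrix.diagonal (σ ∘ Fin.castLE hr.le))⁻¹ +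
      (Matrix.diagonal (σ ∘ Fin.castLE hr.le))⁻¹ *
        A.submatrix (Fin.castLE hr.le) (Fin.castLE hr.le) +
      (∑ i : Fin q, ∑ j : Fin q,
        K i j • (((N i).submatrix (Fin.castLE hr.le) (Fin.castLE hr.le))ᵀ *
          (Matrix.diagonal (σ ∘ Fin.castLE hr.le))⁻¹ *
          (N j).submatrix (Fin.castLE hr.le) (Fin.castLE hr.le))) -
      (C.submatrix id (Fin.castLE hr.le))ᵀ * C.submatrix id (Fin.castLE hr.le) +
      (Matrix.diagonal (σ ∘ Fin.castLE hr.le))⁻¹ * B.submatrix (Fin.castLE hr.le) id *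
        (B.submatrix (Fin.castLE hr.le) id)ᵀ *
        (Matrix.diagonal (σ ∘ Fin.castLE hr.le))⁻¹))).PosSemidef := by
  have he : Function.Injective (Fin.castLE hr.le) := Fin.castLE_injective hr.le
  refine ⟨posSemidef_neg_submatrix_riccati he hK (fun i => (hσpos i).le) hric, ?_⟩
  rw [inv_diagonal_of_ne_zero fun i => (hσpos i).ne'] at hineq
  rw [inv_diagonal_of_ne_zero (d := σ ∘ Fin.castLE hr.le) fun i => (hσpos _).ne']
  have h := posSemidef_neg_submatrix_dual_riccati (d := σ⁻¹) he hK
    (fun i => (inv_pos.2 (hσpos i)).le) hineq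
  rwa [Pi.inv_comp] at h
end

section
/- Let A, N_1, …, N_q ∈ ℝ^{n×n} and let K = (k_{ij}) ∈ ℝ^{q×q} be symmetric positive semidefinite. Suppose there exists a symmetric positive definite X with AᵀX + XA + Σ_{i,j=1}^q N_iᵀ X N_j k_{ij} ≺ 0. Then there is no real λ ≥ 0 and no symmetric positive semidefinite V ≠ 0 such that A V + V Aᵀ + Σ_{i,j=1}^q N_i V N_jᵀ k_{ij} = λV. -/
open Matrix BigOperators

/-! The eigen-equation `L V = l • V` is paired with `X` through the trace form
`⟨X, V⟩ = tr (Xᵀ V)`, for which `L* X = Aᵀ X + X A + ∑ k_ij N_iᵀ X N_j` is the adjoint of `L`.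
This gives `tr (L*(X) V) = l tr (X V) ≥ 0`, whereas `tr (L*(X) V) < 0` because
`-L*(X)` is positive definite and `V ≠ 0` is positive semidefinite. -/

section TraceOfProduct

open scoped ComplexOrder MatrixOrder

variable {𝕜 n : Type*} [RCLike 𝕜] [Fintype n]

theorem Matrix.PosSemidef.trace_mul_nonneg {P V : Matrix n n 𝕜} (hP : P.PosSemidef)
    (hV : V.PosSemidef) : 0 ≤ (P * V).trace := by
  classical
  obtain ⟨B, rfl⟩ := CStarAlgebra.nonneg_iff_eq_star_mul_self.mp hV.nonneg
  rw [star_eq_conjTranspose, ← Matrix.mul_assoc, trace_mul_cycle]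
  exact (hP.mul_mul_conjTranspose_same B).trace_nonneg

theorem Matrix.PosDef.trace_mul_pos {P V : Matrix n n 𝕜} (hP : P.PosDef)
    (hV : V.PosSemidef) (hV0 : V ≠ 0) : 0 < (P * V).trace := by
  classical
  obtain ⟨B, rfl⟩ := CStarAlgebra.nonneg_iff_eq_star_mul_self.mp hV.nonneg
  obtain ⟨k, hk⟩ : ∃ k, B k ≠ 0 := by
    by_contra! h
    exact hV0 (by simp [show B = 0 from funext h])
  -- `tr (P Bᴴ B) = tr (B P Bᴴ)`, whose `k`-th diagonal entry is the `P`-form of the row `B k`.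
  rw [star_eq_conjTranspose, ← Matrix.mul_assoc, trace_mul_cycle]
  refine Finset.sum_pos' (fun i _ => (hP.posSemidef.mul_mul_conjTranspose_same B).diag_nonneg)
    ⟨k, Finset.mem_univ k, ?_⟩
  convert hP.dotProduct_mulVec_pos (x := star (B k)) (by simpa using hk) using 1
  simp only [diag_apply, mul_mul_apply, star_star]
  rfl

end TraceOfProduct

section GeneralizedLyapunov

variable {R n ι : Type*} [CommRing R] [Fintype n] [Fintype ι]

def Matrix.generalizedLyapunov (A : Matrix n n R) (N : ι → Matrix n n R) (K : Matrix ι ι R)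
    (V : Matrix n n R) : Matrix n n R :=
  A * V + V * Aᵀ + ∑ i, ∑ j, K i j • (N i * V * (N j)ᵀ)

def Matrix.generalizedLyapunovAdjoint (A : Matrix n n R) (N : ι → Matrix n n R)
    (K : Matrix ι ι R) (X : Matrix n n R) : Matrix n n R :=
  Aᵀ * X + X * A + ∑ i, ∑ j, K i j • ((N i)ᵀ * X * N j)

theorem Matrix.trace_transpose_generalizedLyapunovAdjoint_mul (A : Matrix n n R)
    (N : ι → Matrix n n R) (K : Matrix ι ι R) (X V : Matrix n n R) :
    ((generalizedLyapunovAdjoint A N K X)ᵀ * V).trace =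
      (Xᵀ * generalizedLyapunov A N K V).trace := by
  simp only [generalizedLyapunovAdjoint, generalizedLyapunov, transpose_add, transpose_mul,
    transpose_transpose, transpose_sum, transpose_smul, Matrix.add_mul, Matrix.mul_add,
    Matrix.sum_mul, Matrix.mul_sum, smul_mul, Matrix.mul_smul, trace_add, trace_sum, trace_smul]
  congr 1
  · rw [Matrix.mul_assoc, trace_mul_cycle, trace_mul_comm (V * Aᵀ)]
  · refine Finset.sum_congr rfl fun i _ => Finset.sum_congr rfl fun j _ => ?_
    rw [Matrix.mul_assoc, trace_mul_comm]
    simp only [Matrix.mul_assoc]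

end GeneralizedLyapunov

theorem stmt_14_general {n q : ℕ}
    (A : Matrix (Fin n) (Fin n) ℝ) (N : Fin q → Matrix (Fin n) (Fin n) ℝ)
    (K : Matrix (Fin q) (Fin q) ℝ)
    (hstable : ∃ X : Matrix (Fin n) (Fin n) ℝ, X.PosDef ∧
      (-(Aᵀ * X + X * A + ∑ i : Fin q, ∑ j : Fin q, K i j • ((N i)ᵀ * X * N j))).PosDef) :
    ¬ ∃ l : ℝ, 0 ≤ l ∧ ∃ V : Matrix (Fin n) (Fin n) ℝ, V.PosSemidef ∧ V ≠ 0 ∧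
      A * V + V * Aᵀ + ∑ i : Fin q, ∑ j : Fin q, K i j • (N i * V * (N j)ᵀ) = l • V := by
  rintro ⟨l, hl, V, hV, hV0, hLV⟩
  obtain ⟨X, hX, hM⟩ := hstable
  set M := generalizedLyapunovAdjoint A N K X
  have hXt : Xᵀ = X := isHermitian_iff_isSymm.mp hX.isHermitian
  have hMt : Mᵀ = M := by
    have := (isHermitian_iff_isSymm.mp hM.isHermitian).eq
    rwa [transpose_neg, neg_inj] at this
  have hMV : (M * V).trace = l * (X * V).trace := by
    rw [← hMt, trace_transpose_generalizedLyapunovAdjoint_mul, hXt, generalizedLyapunov, hLV,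
      Matrix.mul_smul, trace_smul, smul_eq_mul]
  have hpos : 0 < (-M * V).trace := hM.trace_mul_pos hV hV0
  have hnonneg : 0 ≤ l * (X * V).trace := mul_nonneg hl (hX.posSemidef.trace_mul_nonneg hV)
  rw [Matrix.neg_mul, trace_neg, hMV] at hpos
  linarith

/-- Mean square asymptotic stability (Lyapunov form) excludes nonnegative
eigenvalues of the adjoint generalized Lyapunov operator with nonzero positive
semidefinite eigenvectors. -/
theorem stmt_14 {n q : ℕ}
    (A : Matrix (Fin n) (Fin n) ℝ) (N : Fin q → Matrix (Fin n) (Fin n) ℝ)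
    (K : Matrix (Fin q) (Fin q) ℝ) (hK : K.PosSemidef)
    (hstable : ∃ X : Matrix (Fin n) (Fin n) ℝ, X.PosDef ∧
      (-(Aᵀ * X + X * A + ∑ i : Fin q, ∑ j : Fin q, K i j • ((N i)ᵀ * X * N j))).PosDef) :
    ¬ ∃ l : ℝ, 0 ≤ l ∧ ∃ V : Matrix (Fin n) (Fin n) ℝ, V.PosSemidef ∧ V ≠ 0 ∧
      A * V + V * Aᵀ + ∑ i : Fin q, ∑ j : Fin q, K i j • (N i * V * (N j)ᵀ) = l • V :=
  stmt_14_general A N K hstable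
end
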